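/- arXiv:0705.3689 — 5 statements merged into one kernel-verified Lean document; each statement's English description precedes it below -/
import Mathlib

section
/- Let L be a smooth second-order Lagrangian on E. For every u ∈ E and all X, Y ∈ E one has ω²_L(u)(J X, J Y) = 0, ω²_L(u)(J² X, J² Y) = 0, and ω¹_L(u)(J² X, J² Y) = 0. (Both vertical distributions V₁ = Im J and V₂ = Im J² are Lagrangian/isotropic subbundles for the presymplectic form ω²_L, and V₂ is isotropic for ω¹_L.) -/
noncomputable section

/-- `E n = ℝⁿ × ℝⁿ × ℝⁿ`, the standard chart of the second-order tangent bundle `T²ℝⁿ`,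
with points `u = (x, y¹, y²)`. -/
abbrev E (n : ℕ) := (Fin n → ℝ) × (Fin n → ℝ) × (Fin n → ℝ)

/-- Partial derivative `∂f/∂xⁱ`. -/
def px {n : ℕ} (f : E n → ℝ) (i : Fin n) (u : E n) : ℝ :=
  fderiv ℝ f u (Pi.single i 1, 0, 0)

/-- Partial derivative `∂f/∂y¹ⁱ`. -/
def p1 {n : ℕ} (f : E n → ℝ) (i : Fin n) (u : E n) : ℝ :=
  fderiv ℝ f u (0, Pi.single i 1, 0)

/-- Partial derivative `∂f/∂y²ⁱ`. -/
def p2 {n : ℕ} (f : E n → ℝ) (i : Fin n) (u : E n) : ℝ :=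
  fderiv ℝ f u (0, 0, Pi.single i 1)

/-- The Cartan–Poincaré one-form `θ¹_L(u)(X) = Σᵢ [∂L/∂y¹ⁱ(u) X₀ⁱ + ∂L/∂y²ⁱ(u) X₁ⁱ]`. -/
def theta1 {n : ℕ} (L : E n → ℝ) (u : E n) (X : E n) : ℝ :=
  ∑ i, (p1 L i u * X.1 i + p2 L i u * X.2.1 i)

/-- The Cartan–Poincaré one-form `θ²_L(u)(X) = Σᵢ ∂L/∂y²ⁱ(u) X₀ⁱ`. -/
def theta2 {n : ℕ} (L : E n → ℝ) (u : E n) (X : E n) : ℝ :=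
  ∑ i, p2 L i u * X.1 i

/-- Exterior derivative of a one-form:
`dθ(u)(X,Y) = D(θ(·)(Y))(u)(X) − D(θ(·)(X))(u)(Y)`. -/
def extd {n : ℕ} (θ : E n → E n → ℝ) (u : E n) (X Y : E n) : ℝ :=
  fderiv ℝ (fun v => θ v Y) u X - fderiv ℝ (fun v => θ v X) u Y

/-- Cartan–Poincaré two-form `ω¹_L = dθ¹_L`. -/
def omega1 {n : ℕ} (L : E n → ℝ) : E n → E n → E n → ℝ := extd (theta1 L)

/-- Cartan–Poincaré two-form `ω²_L = dθ²_L`. -/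
def omega2 {n : ℕ} (L : E n → ℝ) : E n → E n → E n → ℝ := extd (theta2 L)

/-- The second-order tangent structure `J(a,b,c) = (0,a,b)`. -/
def Jmap {n : ℕ} (X : E n) : E n := (0, X.1, X.2.1)

/-- The semispray with coefficients `G`: `S(u) = (y¹, 2y², −3G(u))`. -/
def spray {n : ℕ} (G : E n → Fin n → ℝ) (u : E n) : E n :=
  (u.2.1, fun i => 2 * u.2.2 i, fun i => -3 * G u i)

/-- The semispray with coefficients `G` acting as a derivation on functions:
`(Sf)(u) = Σᵢ [y¹ⁱ ∂f/∂xⁱ + 2y²ⁱ ∂f/∂y¹ⁱ − 3Gⁱ(u) ∂f/∂y²ⁱ]`. -/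
def Sop {n : ℕ} (G : E n → Fin n → ℝ) (f : E n → ℝ) (u : E n) : ℝ :=
  ∑ i, (u.2.1 i * px f i u + 2 * u.2.2 i * p1 f i u - 3 * G u i * p2 f i u)

/-- Lie derivative of a one-form along a vector field `S`:
`(𝓛_S θ)(u)(X) = D(θ(·)(X))(u)(S(u)) + θ(u)(DS(u)(X))`. -/
def lieForm {n : ℕ} (S : E n → E n) (θ : E n → E n → ℝ) (u : E n) (X : E n) : ℝ :=
  fderiv ℝ (fun v => θ v X) u (S u) + θ u (fderiv ℝ S u X)

/-- The Liouville operator `(C₂f)(u) = Σᵢ [y¹ⁱ ∂f/∂y¹ⁱ + 2y²ⁱ ∂f/∂y²ⁱ]`. -/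
def C2op {n : ℕ} (f : E n → ℝ) (u : E n) : ℝ :=
  ∑ i, (u.2.1 i * p1 f i u + 2 * u.2.2 i * p2 f i u)

/-- The Liouville operator `(C₁f)(u) = Σᵢ y¹ⁱ ∂f/∂y²ⁱ`. -/
def C1op {n : ℕ} (f : E n → ℝ) (u : E n) : ℝ :=
  ∑ i, u.2.1 i * p2 f i u

/-- The metric tensor `g_{ij} = ½ ∂²L/∂y²ⁱ∂y²ʲ` of a second-order Lagrangian. -/
def gmet {n : ℕ} (L : E n → ℝ) (i j : Fin n) (u : E n) : ℝ := (1/2) * p2 (p2 L j) i u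

/-- The metric tensor as a matrix. -/
def gmat {n : ℕ} (L : E n → ℝ) (u : E n) : Matrix (Fin n) (Fin n) ℝ :=
  Matrix.of fun i j => gmet L i j u

/-- The Tulczyjew operator `(d_T f)(u) = Σᵢ [y¹ⁱ ∂f/∂xⁱ + 2y²ⁱ ∂f/∂y¹ⁱ]`. -/
def dT {n : ℕ} (f : E n → ℝ) (u : E n) : ℝ :=
  ∑ i, (u.2.1 i * px f i u + 2 * u.2.2 i * p1 f i u)

/-- The canonical semispray coefficients
`Gʲ = (1/6) Σᵢ gʲⁱ [d_T(∂L/∂y²ⁱ) − ∂L/∂y¹ⁱ]` of a regular second-order Lagrangian. -/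
def Gcan {n : ℕ} (L : E n → ℝ) (u : E n) (j : Fin n) : ℝ :=
  (1/6) * ∑ i, (gmat L u)⁻¹ j i * (dT (p2 L i) u - p1 L i u)

/-- both vertical distributions `V₁ = Im J` and `V₂ = Im J²` are isotropic
(Lagrangian) for the presymplectic form `ω²_L`, and `V₂` is isotropic for `ω¹_L`. -/
theorem statement0 {n : ℕ} (hn : 1 ≤ n) (L : E n → ℝ) (hL : ContDiff ℝ (⊤ : ℕ∞) L) :
    ∀ u X Y : E n,
      omega2 L u (Jmap X) (Jmap Y) = 0 ∧
      omega2 L u (Jmap (Jmap X)) (Jmap (Jmap Y)) = 0 ∧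
      omega1 L u (Jmap (Jmap X)) (Jmap (Jmap Y)) = 0 := by
  intro u X Y
  have h2 : ∀ Z : E n, (fun v => theta2 L v (Jmap Z)) = fun _ => (0:ℝ) := by
    intro Z; funext v; simp [theta2, Jmap]
  have h1 : ∀ Z : E n, (fun v => theta1 L v (Jmap (Jmap Z))) = fun _ => (0:ℝ) := by
    intro Z; funext v; simp [theta1, Jmap]
  refine ⟨?_, ?_, ?_⟩
  · show extd (theta2 L) u (Jmap X) (Jmap Y) = 0
    rw [extd, h2 X, h2 Y, fderiv_fun_const]; simp
  · show extd (theta2 L) u (Jmap (Jmap X)) (Jmap (Jmap Y)) = 0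
    rw [extd, h2 (Jmap X), h2 (Jmap Y), fderiv_fun_const]; simp
  · show extd (theta1 L) u (Jmap (Jmap X)) (Jmap (Jmap Y)) = 0
    rw [extd, h1 X, h1 Y, fderiv_fun_const]; simp
end
end

section
/- Let L be a regular smooth second-order Lagrangian on E. Then for every u ∈ E the presymplectic form ω²_L(u) has rank 2n; equivalently, the kernel {X ∈ E : ω²_L(u)(X, Y) = 0 for all Y ∈ E} is an n-dimensional subspace of E. -/
noncomputable section

noncomputable section Aux
variable {n : ℕ}

lemma p2_contDiff {f : E n → ℝ} (hf : ContDiff ℝ (⊤ : ℕ∞) f) (i : Fin n) :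
    ContDiff ℝ (⊤ : ℕ∞) (p2 f i) := by
  have h : ContDiff ℝ (⊤ : ℕ∞) (fderiv ℝ f) := hf.fderiv_right (by simp)
  exact (ContinuousLinearMap.apply ℝ ℝ ((0, 0, Pi.single i 1) : E n)).contDiff.comp h

lemma clm_decomp (φ : E n →L[ℝ] ℝ) (X : E n) :
    φ X = ∑ j, X.1 j * φ (Pi.single j 1, 0, 0)
        + ∑ j, X.2.1 j * φ (0, Pi.single j 1, 0)
        + ∑ j, X.2.2 j * φ (0, 0, Pi.single j 1) := by
  have hX : X = (∑ j, X.1 j • ((Pi.single j 1, 0, 0) : E n))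
      + (∑ j, X.2.1 j • ((0, Pi.single j 1, 0) : E n))
      + (∑ j, X.2.2 j • ((0, 0, Pi.single j 1) : E n)) := by
    refine Prod.ext ?_ (Prod.ext ?_ ?_) <;> funext k <;>
      simp [Prod.fst_sum, Prod.snd_sum, Finset.sum_apply, Pi.single_apply,
        mul_ite, Finset.sum_ite_eq', Finset.sum_ite_eq]
  conv_lhs => rw [hX]
  rw [map_add, map_add, map_sum, map_sum, map_sum]
  congr 1
  · congr 1
    · exact Finset.sum_congr rfl fun j _ => by rw [map_smul, smul_eq_mul]
    · exact Finset.sum_congr rfl fun j _ => by rw [map_smul, smul_eq_mul]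
  · exact Finset.sum_congr rfl fun j _ => by rw [map_smul, smul_eq_mul]

end Aux

open Matrix

/-- for a regular second-order Lagrangian, the presymplectic form `ω²_L(u)`
has rank `2n`; equivalently its kernel is an `n`-dimensional subspace of `E`. -/
theorem statement3 {n : ℕ} (hn : 1 ≤ n) (L : E n → ℝ) (hL : ContDiff ℝ (⊤ : ℕ∞) L)
    (hreg : ∀ u : E n, IsUnit (gmat L u)) :
    ∀ u : E n, ∃ K : Submodule ℝ (E n),
      (K : Set (E n)) = {X : E n | ∀ Y : E n, omega2 L u X Y = 0} ∧
      Module.finrank ℝ K = n := by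
  intro u
  classical
  set D : Fin n → (E n →L[ℝ] ℝ) := fun i => fderiv ℝ (p2 L i) u with hDdef
  have hdiff : ∀ i, HasFDerivAt (p2 L i) (D i) u := fun i =>
    (((p2_contDiff hL i).differentiable (by simp)) u).hasFDerivAt
  have homega : ∀ X Y : E n,
      omega2 L u X Y = (∑ i, Y.1 i * D i X) - (∑ i, X.1 i * D i Y) := by
    have h1 : ∀ Z : E n, fderiv ℝ (fun v => theta2 L v Z) u = ∑ i, Z.1 i • D i := by
      intro Z
      have h : HasFDerivAt (fun v => theta2 L v Z) (∑ i, Z.1 i • D i) u := by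
        have := HasFDerivAt.fun_sum (fun i (_ : i ∈ Finset.univ) => (hdiff i).mul_const (Z.1 i))
        simpa [theta2] using this
      exact h.fderiv
    intro X Y
    simp [omega2, extd, h1, ContinuousLinearMap.sum_apply, ContinuousLinearMap.smul_apply,
      smul_eq_mul]
  set B : Matrix (Fin n) (Fin n) ℝ := Matrix.of fun i j => D i (0, Pi.single j 1, 0) with hBdef
  set C : Matrix (Fin n) (Fin n) ℝ := Matrix.of fun i j => D i (0, 0, Pi.single j 1) with hCdef
  have hC : C = (2 : ℝ) • (gmat L u).transpose := by
    ext i j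
    have h1 : C i j = p2 (p2 L i) j u := rfl
    have h2 : ((2 : ℝ) • (gmat L u).transpose) i j = 2 * ((1/2) * p2 (p2 L i) j u) := rfl
    rw [h1, h2]; ring
  have hgdet : IsUnit (gmat L u).det := (Matrix.isUnit_iff_isUnit_det _).mp (hreg u)
  have hCdet : IsUnit C.det := by
    rw [hC, Matrix.det_smul, Matrix.det_transpose, isUnit_iff_ne_zero]
    exact mul_ne_zero (pow_ne_zero _ two_ne_zero) (isUnit_iff_ne_zero.mp hgdet)
  have hCinv : C⁻¹ * C = 1 := Matrix.nonsing_inv_mul C hCdet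
  have hCinv' : C * C⁻¹ = 1 := Matrix.mul_nonsing_inv C hCdet
  -- value of D i on vectors with vanishing first component
  have hDval : ∀ X : E n, X.1 = 0 → ∀ i, D i X = (B *ᵥ X.2.1 + C *ᵥ X.2.2) i := by
    intro X h1 i
    rw [clm_decomp (D i) X]
    simp [h1, Matrix.mulVec, dotProduct, hBdef, hCdef, mul_comm]
  -- kernel characterization
  have hker : ∀ X : E n, (∀ Y, omega2 L u X Y = 0) ↔
      (X.1 = 0 ∧ B *ᵥ X.2.1 + C *ᵥ X.2.2 = 0) := by
    intro X
    constructor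
    · intro h
      have hX1 : X.1 = 0 := by
        have hvm : X.1 ᵥ* C = 0 := by
          funext k
          have h0 := h (0, 0, Pi.single k 1)
          rw [homega] at h0
          have hDk : ∀ i, D i ((0, 0, Pi.single k 1) : E n) = C i k := fun i => rfl
          simp only [hDk] at h0
          simpa [Matrix.vecMul, dotProduct, mul_comm] using h0
        have := congrArg (fun v => v ᵥ* C⁻¹) hvm
        simpa [Matrix.vecMul_vecMul, hCinv', Matrix.vecMul_one, Matrix.zero_vecMul] using this
      have hX2 : ∀ i, D i X = 0 := by
        intro k
        have h0 := h ((Pi.single k 1, 0, 0) : E n)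
        rw [homega] at h0
        simpa [hX1, Pi.single_apply, ite_mul, Finset.sum_ite_eq', Finset.sum_ite_eq] using h0
      refine ⟨hX1, ?_⟩
      funext i
      have := hDval X hX1 i
      rw [hX2 i] at this
      simpa using this.symm
    · rintro ⟨h1, h2⟩ Y
      rw [homega]
      have : ∀ i, D i X = 0 := by
        intro i
        rw [hDval X h1 i, h2]
        rfl
      simp [h1, this]
  -- the submodule
  let T : (Fin n → ℝ) →ₗ[ℝ] E n :=
    { toFun := fun a => ((0 : Fin n → ℝ), a, -(C⁻¹ *ᵥ (B *ᵥ a)))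
      map_add' := by
        intro a b
        simp [Prod.mk_add_mk, Matrix.mulVec_add, neg_add, add_comm]
      map_smul' := by
        intro c a
        simp [Prod.smul_mk, Matrix.mulVec_smul, smul_neg] }
  refine ⟨LinearMap.range T, ?_, ?_⟩
  · ext X
    simp only [SetLike.mem_coe, LinearMap.mem_range, Set.mem_setOf_eq, hker]
    constructor
    · rintro ⟨a, rfl⟩
      refine ⟨rfl, ?_⟩
      show B *ᵥ a + C *ᵥ (-(C⁻¹ *ᵥ (B *ᵥ a))) = 0
      rw [Matrix.mulVec_neg, Matrix.mulVec_mulVec, hCinv', Matrix.one_mulVec, add_neg_cancel]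
    · rintro ⟨h1, h2⟩
      refine ⟨X.2.1, ?_⟩
      have hx22 : X.2.2 = -(C⁻¹ *ᵥ (B *ᵥ X.2.1)) := by
        have h3 : C *ᵥ X.2.2 = -(B *ᵥ X.2.1) := eq_neg_of_add_eq_zero_right h2
        have := congrArg (fun v => C⁻¹ *ᵥ v) h3
        simpa [Matrix.mulVec_mulVec, hCinv, Matrix.one_mulVec, Matrix.mulVec_neg] using this
      show ((0 : Fin n → ℝ), X.2.1, -(C⁻¹ *ᵥ (B *ᵥ X.2.1))) = X
      exact Prod.ext h1.symm (Prod.ext rfl hx22.symm)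
  · have hinj : Function.Injective T := by
      intro a b h
      have := congrArg (fun z : E n => z.2.1) h
      simpa [T] using this
    rw [LinearMap.finrank_range_of_inj hinj, Module.finrank_fin_fun]
end
end

section
/- Craig–Synge variational characterization: let L be a smooth second-order Lagrangian on E and x : ℝ → ℝⁿ smooth, with lifted curve c(t) = (x(t), x'(t), ½x''(t)). Then the following are equivalent: (i) for every smooth V : ℝ → ℝⁿ with V(0) = V(1) = 0, the function ε ↦ ∫₀¹ L(x(t), x'(t) + εV(t), ½x''(t) + εV'(t)) dt has vanishing derivative at ε = 0; (ii) the Craig–Synge equations hold along c: for every t ∈ [0,1] and every i, ∂L/∂y¹ⁱ(c(t)) − (d/dt)(∂L/∂y²ⁱ(c(t))) = 0. -/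
noncomputable section

/-- The lift of a curve `x` to `T²ℝⁿ`: `c(t) = (x(t), x'(t), ½ x''(t))`. -/
def lift {n : ℕ} (x : ℝ → Fin n → ℝ) (t : ℝ) : E n :=
  (x t, deriv x t, fun i => (1/2) * deriv (deriv x) t i)

open MeasureTheory intervalIntegral Metric Set

namespace CS

variable {n : ℕ}

lemma pd_contDiff {L : E n → ℝ} (hL : ContDiff ℝ (⊤ : ℕ∞) L) (v : E n) :
    ContDiff ℝ (⊤ : ℕ∞) fun u => fderiv ℝ L u v :=
  (hL.fderiv_right (by simp)).clm_apply contDiff_const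

lemma deriv_contDiff {F : Type*} [NormedAddCommGroup F] [NormedSpace ℝ F] {x : ℝ → F}
    (hx : ContDiff ℝ (⊤ : ℕ∞) x) : ContDiff ℝ (⊤ : ℕ∞) (deriv x) := by
  have h : deriv x = fun t => fderiv ℝ x t 1 := funext fun t => (fderiv_apply_one_eq_deriv).symm
  rw [h]
  exact (hx.fderiv_right (by simp)).clm_apply contDiff_const

lemma lift_contDiff {x : ℝ → Fin n → ℝ} (hx : ContDiff ℝ (⊤ : ℕ∞) x) : ContDiff ℝ (⊤ : ℕ∞) (lift x) := by
  refine hx.prodMk ((deriv_contDiff hx).prodMk ?_)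
  refine contDiff_pi.2 fun i => contDiff_const.mul ?_
  exact (ContinuousLinearMap.proj i : (Fin n → ℝ) →L[ℝ] ℝ).contDiff.comp
    (deriv_contDiff (deriv_contDiff hx))

lemma fderiv_apply_eq {L : E n → ℝ} (hL : ContDiff ℝ (⊤ : ℕ∞) L) (u : E n) (a b : Fin n → ℝ) :
    fderiv ℝ L u (0, a, b) = ∑ i, (a i * p1 L i u + b i * p2 L i u) := by
  have h : ((0, a, b) : E n)
      = ∑ i : Fin n, (a i • ((0, Pi.single i 1, 0) : E n)
          + b i • ((0, 0, Pi.single i 1) : E n)) := by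
    refine Prod.ext ?_ (Prod.ext ?_ ?_) <;>
      · simp only [Prod.fst_sum, Prod.snd_sum, Prod.fst_add, Prod.snd_add, Prod.smul_mk,
          smul_zero, add_zero, zero_add]
        funext j
        simp [Finset.sum_apply, Pi.single_apply, mul_ite]
  rw [h, map_sum]
  refine Finset.sum_congr rfl fun i _ => ?_
  rw [map_add, (fderiv ℝ L u).map_smul, (fderiv ℝ L u).map_smul]
  simp [p1, p2]

end CS

namespace CS

lemma action_hasDerivAt {n : ℕ} {L : E n → ℝ} (hL : ContDiff ℝ (⊤ : ℕ∞) L) {x V : ℝ → Fin n → ℝ}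
    (hx : ContDiff ℝ (⊤ : ℕ∞) x) (hV : ContDiff ℝ (⊤ : ℕ∞) V) :
    HasDerivAt (fun ε : ℝ => ∫ t in (0:ℝ)..1,
        L (x t, fun i => deriv x t i + ε * V t i,
             fun i => (1/2) * deriv (deriv x) t i + ε * deriv V t i))
      (∫ t in (0:ℝ)..1, fderiv ℝ L (lift x t) (0, V t, deriv V t)) 0 := by
  set w : ℝ → E n := fun t => (0, V t, deriv V t) with hw
  have hwc : Continuous w :=
    continuous_const.prodMk (hV.continuous.prodMk (deriv_contDiff hV).continuous)
  have hlc : Continuous (lift x) := (lift_contDiff hx).continuous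
  have hpt : ∀ (ε t : ℝ), ((x t, fun i => deriv x t i + ε * V t i,
      fun i => (1/2) * deriv (deriv x) t i + ε * deriv V t i) : E n)
        = lift x t + ε • w t := by
    intro ε t
    refine Prod.ext ?_ (Prod.ext ?_ ?_) <;> · funext j; simp [lift, hw]
  have hF'cont : Continuous fun p : ℝ × ℝ => fderiv ℝ L (lift x p.2 + p.1 • w p.2) (w p.2) := by
    have h1 : Continuous fun p : ℝ × ℝ => lift x p.2 + p.1 • w p.2 :=
      (hlc.comp continuous_snd).add (continuous_fst.smul (hwc.comp continuous_snd))
    exact ((hL.fderiv_right (m := (⊤ : ℕ∞)) (by simp)).continuous.comp h1).clm_apply (hwc.comp continuous_snd)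
  obtain ⟨C, hC⟩ := (isCompact_Icc.prod isCompact_Icc :
      IsCompact (Icc (-1:ℝ) 1 ×ˢ Icc (0:ℝ) 1)).exists_bound_of_continuousOn hF'cont.continuousOn
  have key : HasDerivAt (fun ε : ℝ => ∫ t in (0:ℝ)..1, L (lift x t + ε • w t))
      (∫ t in (0:ℝ)..1, fderiv ℝ L (lift x t + (0:ℝ) • w t) (w t)) 0 := by
    refine (intervalIntegral.hasDerivAt_integral_of_dominated_loc_of_deriv_le (𝕜 := ℝ)
      (F := fun ε t => L (lift x t + ε • w t))
      (F' := fun ε t => fderiv ℝ L (lift x t + ε • w t) (w t))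
      (bound := fun _ => C) (Metric.ball_mem_nhds 0 zero_lt_one) ?_ ?_ ?_ ?_ ?_ ?_).2
    · filter_upwards with ε
      exact ((hL.continuous.comp (hlc.add (hwc.const_smul ε)))).aestronglyMeasurable
    · exact (hL.continuous.comp (hlc.add (hwc.const_smul (0:ℝ)))).intervalIntegrable 0 1
    · exact (hF'cont.comp (continuous_const.prodMk continuous_id)).aestronglyMeasurable
    · filter_upwards with t ht ε' hε'
      refine hC (ε', t) ⟨?_, ?_⟩
      · rw [Metric.mem_ball, Real.dist_eq, sub_zero] at hε'
        exact ⟨(abs_lt.1 hε').1.le, (abs_lt.1 hε').2.le⟩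
      · rw [Set.uIoc_of_le zero_le_one] at ht
        exact ⟨ht.1.le, ht.2⟩
    · exact intervalIntegrable_const
    · filter_upwards with t ht ε' hε'
      have hg : HasDerivAt (fun ε : ℝ => lift x t + ε • w t) (w t) ε' := by
        simpa using ((hasDerivAt_id ε').smul_const (w t)).const_add (lift x t)
      exact ((hL.differentiable (by simp) _).hasFDerivAt).comp_hasDerivAt ε' hg
  have heq : (fun ε : ℝ => ∫ t in (0:ℝ)..1, L (lift x t + ε • w t))
      = fun ε : ℝ => ∫ t in (0:ℝ)..1,
        L (x t, fun i => deriv x t i + ε * V t i,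
             fun i => (1/2) * deriv (deriv x) t i + ε * deriv V t i) := by
    funext ε
    congr 1
    funext t
    rw [hpt]
  rw [heq] at key
  simpa using key

end CS

namespace CS

lemma variation_eq {n : ℕ} {L : E n → ℝ} (hL : ContDiff ℝ (⊤ : ℕ∞) L) {x V : ℝ → Fin n → ℝ}
    (hx : ContDiff ℝ (⊤ : ℕ∞) x) (hV : ContDiff ℝ (⊤ : ℕ∞) V) (hV0 : V 0 = 0) (hV1 : V 1 = 0) :
    (∫ t in (0:ℝ)..1, fderiv ℝ L (lift x t) (0, V t, deriv V t))
      = ∫ t in (0:ℝ)..1,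
          ∑ i, (p1 L i (lift x t) - deriv (fun s => p2 L i (lift x s)) t) * V t i := by
  have hlc : ContDiff ℝ (⊤ : ℕ∞) (lift x) := lift_contDiff hx
  have hp1 : ∀ i : Fin n, ContDiff ℝ (⊤ : ℕ∞) fun t => p1 L i (lift x t) :=
    fun i => (pd_contDiff hL _).comp hlc
  have hP : ∀ i : Fin n, ContDiff ℝ (⊤ : ℕ∞) fun t => p2 L i (lift x t) :=
    fun i => (pd_contDiff hL _).comp hlc
  have hVi : ∀ i : Fin n, Continuous fun t => V t i := fun i => by
    exact ((ContinuousLinearMap.proj i : (Fin n → ℝ) →L[ℝ] ℝ).continuous).comp hV.continuous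
  have hdVi : ∀ i : Fin n, Continuous fun t => deriv V t i := fun i => by
    exact ((ContinuousLinearMap.proj i : (Fin n → ℝ) →L[ℝ] ℝ).continuous).comp
      (deriv_contDiff hV).continuous
  have hVi' : ∀ (i : Fin n) (t : ℝ), HasDerivAt (fun s => V s i) (deriv V t i) t :=
    fun i t => hasDerivAt_pi.1 ((hV.differentiable (by simp) t).hasDerivAt) i
  have hint1 : ∀ i : Fin n, IntervalIntegrable
      (fun t => V t i * p1 L i (lift x t) + deriv V t i * p2 L i (lift x t))
      MeasureTheory.volume 0 1 :=
    fun i => (((hVi i).mul (hp1 i).continuous).add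
      ((hdVi i).mul (hP i).continuous)).intervalIntegrable 0 1
  have hint2 : ∀ i : Fin n, IntervalIntegrable
      (fun t => (p1 L i (lift x t) - deriv (fun s => p2 L i (lift x s)) t) * V t i)
      MeasureTheory.volume 0 1 :=
    fun i => (((hp1 i).continuous.sub (deriv_contDiff (hP i)).continuous).mul
      (hVi i)).intervalIntegrable 0 1
  have h1 : (fun t => fderiv ℝ L (lift x t) (0, V t, deriv V t))
      = fun t => ∑ i, (V t i * p1 L i (lift x t) + deriv V t i * p2 L i (lift x t)) := by
    funext t
    exact fderiv_apply_eq hL _ _ _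
  rw [h1]
  rw [intervalIntegral.integral_finset_sum (fun i _ => hint1 i),
    intervalIntegral.integral_finset_sum (fun i _ => hint2 i)]
  refine Finset.sum_congr rfl fun i _ => ?_
  have ibp := intervalIntegral.integral_mul_deriv_eq_deriv_mul
    (u := fun t => p2 L i (lift x t)) (u' := fun t => deriv (fun s => p2 L i (lift x s)) t)
    (v := fun t => V t i) (v' := fun t => deriv V t i) (a := 0) (b := 1)
    (fun t _ => ((hP i).differentiable (by simp) t).hasDerivAt)
    (fun t _ => hVi' i t)
    ((deriv_contDiff (hP i)).continuous.intervalIntegrable 0 1)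
    ((hdVi i).intervalIntegrable 0 1)
  have hV1i : V 1 i = 0 := by rw [hV1]; rfl
  have hV0i : V 0 i = 0 := by rw [hV0]; rfl
  simp only [hV1i, hV0i, mul_zero, sub_zero, zero_sub] at ibp
  rw [intervalIntegral.integral_add (f := fun t => V t i * p1 L i (lift x t))
    (g := fun t => deriv V t i * p2 L i (lift x t))
    (((hVi i).mul (hp1 i).continuous).intervalIntegrable 0 1)
    (((hdVi i).mul (hP i).continuous).intervalIntegrable 0 1)]
  have hcomm : (∫ t in (0:ℝ)..1, deriv V t i * p2 L i (lift x t))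
      = ∫ t in (0:ℝ)..1, p2 L i (lift x t) * deriv V t i := by
    congr 1; funext t; ring
  rw [hcomm, ibp]
  rw [← sub_eq_add_neg, ← intervalIntegral.integral_sub (f := fun t => V t i * p1 L i (lift x t))
    (g := fun t => deriv (fun s => p2 L i (lift x s)) t * V t i)
    (((hVi i).mul (hp1 i).continuous).intervalIntegrable 0 1)
    (((deriv_contDiff (hP i)).continuous.mul (hVi i)).intervalIntegrable 0 1)]
  congr 1; funext t; ring

end CS

namespace CS

lemma fund {n : ℕ} {g : Fin n → ℝ → ℝ} (hg : ∀ i, ContDiff ℝ (⊤ : ℕ∞) (g i))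
    (H : ∀ V : ℝ → Fin n → ℝ, ContDiff ℝ (⊤ : ℕ∞) V → V 0 = 0 → V 1 = 0 →
      (∫ t in (0:ℝ)..1, ∑ i, g i t * V t i) = 0) :
    ∀ t ∈ Icc (0:ℝ) 1, ∀ i, g i t = 0 := by
  intro t ht i
  have interior_zero : ∀ s ∈ Ioo (0:ℝ) 1, g i s = 0 := by
    intro s hs
    by_contra hne
    set φ : ℝ → ℝ := fun u => u * (1 - u) with hφdef
    have hφc : ContDiff ℝ (⊤ : ℕ∞) φ := contDiff_id.mul (contDiff_const.sub contDiff_id)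
    set V : ℝ → Fin n → ℝ := fun u => Pi.single i (φ u * g i u) with hVdef
    have hVc : ContDiff ℝ (⊤ : ℕ∞) V := by
      refine contDiff_pi.2 fun j => ?_
      have h2 : (fun u => V u j) = fun u => if j = i then φ u * g i u else 0 := by
        funext u; simp [hVdef, Pi.single_apply]
      rw [h2]
      by_cases h : j = i
      · simpa [h] using hφc.mul (hg i)
      · simpa [h] using contDiff_const (c := (0:ℝ))
    have hφ0 : φ 0 = 0 := by simp [hφdef]
    have hφ1 : φ 1 = 0 := by simp [hφdef]
    have hV0 : V 0 = 0 := by funext j; simp [hVdef, hφ0]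
    have hV1 : V 1 = 0 := by funext j; simp [hVdef, hφ1]
    have hint := H V hVc hV0 hV1
    have hsum : ∀ u : ℝ, (∑ j, g j u * V u j) = φ u * (g i u)^2 := by
      intro u
      rw [Finset.sum_eq_single i]
      · simp [hVdef]; ring
      · intro j _ hj; simp [hVdef, Pi.single_apply, hj]
      · intro h; exact absurd (Finset.mem_univ i) h
    have hint2 : (∫ u in (0:ℝ)..1, φ u * (g i u)^2) = 0 := by
      rw [← hint]; congr 1; funext u; rw [hsum]
    have hcont : Continuous fun u => φ u * (g i u)^2 :=
      hφc.continuous.mul ((hg i).continuous.pow 2)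
    have hnn : ∀ u ∈ Icc (0:ℝ) 1, 0 ≤ φ u * (g i u)^2 := by
      intro u hu
      have : 0 ≤ φ u := mul_nonneg hu.1 (by linarith [hu.2])
      positivity
    have hposs : 0 < φ s * (g i s)^2 := by
      have h1 : 0 < φ s := mul_pos hs.1 (by linarith [hs.2])
      have h2 : 0 < (g i s)^2 := by positivity
      positivity
    have hU : IsOpen {u : ℝ | 0 < φ u * (g i u)^2} := isOpen_lt continuous_const hcont
    obtain ⟨δ, hδpos, hδ⟩ := Metric.isOpen_iff.1 hU s hposs
    set d : ℝ := min (δ/2) (min s (1 - s)) with hd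
    have hdpos : 0 < d := lt_min (by positivity) (lt_min hs.1 (by linarith [hs.2]))
    have hds : d ≤ s := le_trans (min_le_right _ _) (min_le_left _ _)
    have hd1s : d ≤ 1 - s := le_trans (min_le_right _ _) (min_le_right _ _)
    have hdδ : d ≤ δ/2 := min_le_left _ _
    have hsub : Ioo (s - d) (s + d) ⊆ {u : ℝ | 0 < φ u * (g i u)^2} := by
      intro u hu
      apply hδ
      rw [Metric.mem_ball, Real.dist_eq, abs_lt]
      constructor
      · have := hu.1; linarith
      · have := hu.2; linarith
    have h0a : (0:ℝ) ≤ s - d := by linarith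
    have hb1 : s + d ≤ 1 := by linarith
    have hii : ∀ a b : ℝ, IntervalIntegrable (fun u => φ u * (g i u)^2) MeasureTheory.volume a b :=
      fun a b => hcont.intervalIntegrable a b
    have hsplit : (∫ u in (0:ℝ)..1, φ u * (g i u)^2)
        = (∫ u in (0:ℝ)..(s-d), φ u * (g i u)^2) + ((∫ u in (s-d)..(s+d), φ u * (g i u)^2)
          + (∫ u in (s+d)..1, φ u * (g i u)^2)) := by
      rw [← intervalIntegral.integral_add_adjacent_intervals (hii 0 (s-d)) (hii (s-d) 1),
        ← intervalIntegral.integral_add_adjacent_intervals (hii (s-d) (s+d)) (hii (s+d) 1)]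
    have hpos1 : 0 < ∫ u in (s-d)..(s+d), φ u * (g i u)^2 :=
      intervalIntegral.intervalIntegral_pos_of_pos_on (hii _ _)
        (fun u hu => hsub hu) (by linarith)
    have hnn1 : 0 ≤ ∫ u in (0:ℝ)..(s-d), φ u * (g i u)^2 :=
      intervalIntegral.integral_nonneg h0a (fun u hu => hnn u ⟨hu.1, le_trans hu.2 (by linarith)⟩)
    have hnn2 : 0 ≤ ∫ u in (s+d)..1, φ u * (g i u)^2 :=
      intervalIntegral.integral_nonneg hb1 (fun u hu => hnn u ⟨le_trans (by linarith) hu.1, hu.2⟩)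
    rw [hsplit] at hint2
    linarith
  have hclosed : IsClosed {u : ℝ | g i u = 0} := isClosed_eq (hg i).continuous continuous_const
  have hsubset : Icc (0:ℝ) 1 ⊆ {u : ℝ | g i u = 0} := by
    rw [← closure_Ioo (zero_ne_one)]
    exact closure_minimal (fun u hu => interior_zero u hu) hclosed
  exact hsubset ht

end CS

/-- Craig–Synge variational characterization. The first variation of the action
of `L` along `c(t) = (x(t), x'(t), ½x''(t))` vanishes for every smooth variation `V` of the
vertical part with `V(0) = V(1) = 0` if and only if the Craig–Synge equations
`∂L/∂y¹ⁱ(c(t)) − (d/dt)(∂L/∂y²ⁱ(c(t))) = 0` hold for every `t ∈ [0,1]` and every `i`. -/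
theorem statement5 {n : ℕ} (hn : 1 ≤ n) (L : E n → ℝ) (hL : ContDiff ℝ (⊤ : ℕ∞) L)
    (x : ℝ → Fin n → ℝ) (hx : ContDiff ℝ (⊤ : ℕ∞) x) :
    (∀ V : ℝ → Fin n → ℝ, ContDiff ℝ (⊤ : ℕ∞) V → V 0 = 0 → V 1 = 0 →
      deriv (fun ε : ℝ => ∫ t in (0:ℝ)..1,
        L (x t, fun i => deriv x t i + ε * V t i,
             fun i => (1/2) * deriv (deriv x) t i + ε * deriv V t i)) 0 = 0)
    ↔
    (∀ t ∈ Set.Icc (0:ℝ) 1, ∀ i : Fin n,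
      p1 L i (lift x t) - deriv (fun s => p2 L i (lift x s)) t = 0) := by
  classical
  have hkey : ∀ V : ℝ → Fin n → ℝ, ContDiff ℝ (⊤ : ℕ∞) V → V 0 = 0 → V 1 = 0 →
      HasDerivAt (fun ε : ℝ => ∫ t in (0:ℝ)..1,
        L (x t, fun i => deriv x t i + ε * V t i,
             fun i => (1/2) * deriv (deriv x) t i + ε * deriv V t i))
        (∫ t in (0:ℝ)..1,
          ∑ i, (p1 L i (lift x t) - deriv (fun s => p2 L i (lift x s)) t) * V t i) 0 := by
    intro V hVc hV0 hV1
    have h := CS.action_hasDerivAt hL hx hVc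
    rwa [CS.variation_eq hL hx hVc hV0 hV1] at h
  constructor
  · intro H
    refine CS.fund (g := fun i t => p1 L i (lift x t) - deriv (fun s => p2 L i (lift x s)) t)
      (fun i => ?_) (fun V hVc hV0 hV1 => ?_)
    · exact ((CS.pd_contDiff hL _).comp (CS.lift_contDiff hx)).sub
        (CS.deriv_contDiff ((CS.pd_contDiff hL _).comp (CS.lift_contDiff hx)))
    · have hd := (hkey V hVc hV0 hV1).deriv
      rw [← hd]
      exact H V hVc hV0 hV1
  · intro hE V hVc hV0 hV1
    rw [(hkey V hVc hV0 hV1).deriv]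
    have heq : Set.EqOn
        (fun t => ∑ i, (p1 L i (lift x t) - deriv (fun s => p2 L i (lift x s)) t) * V t i)
        (fun _ => (0:ℝ)) (Set.uIcc (0:ℝ) 1) := by
      intro t htm
      rw [Set.uIcc_of_le zero_le_one] at htm
      simp only
      rw [Finset.sum_eq_zero]
      intro i _
      rw [hE t htm i, zero_mul]
    rw [intervalIntegral.integral_congr heq, intervalIntegral.integral_zero]
end
end

section
/- Local expression of the Lie derivative of θ²_L: let L be a smooth second-order Lagrangian on E and S a semispray with coefficients G. Then for every u ∈ E and X = (X₀, X₁, X₂) ∈ E: (𝓛_S θ²_L)(u)(X) = Σᵢ [d_T(∂L/∂y²ⁱ)(u) − 6 Σⱼ g_{ji}(u) Gʲ(u)] X₀ⁱ + Σᵢ ∂L/∂y²ⁱ(u) X₁ⁱ. -/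
noncomputable section

lemma clm_expand {n : ℕ} (l : E n →L[ℝ] ℝ) (v : E n) :
    l v = ∑ j, v.1 j * l (Pi.single j 1, 0, 0)
        + ∑ j, v.2.1 j * l (0, Pi.single j 1, 0)
        + ∑ j, v.2.2 j * l (0, 0, Pi.single j 1) := by
  have hv : v = (∑ j, v.1 j • ((Pi.single j 1 : Fin n → ℝ), (0 : Fin n → ℝ), (0 : Fin n → ℝ)))
      + (∑ j, v.2.1 j • ((0 : Fin n → ℝ), (Pi.single j 1 : Fin n → ℝ), (0 : Fin n → ℝ)))
      + (∑ j, v.2.2 j • ((0 : Fin n → ℝ), (0 : Fin n → ℝ), (Pi.single j 1 : Fin n → ℝ))) := by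
    have h1 : ∀ (w : Fin n → ℝ), ∑ j, w j • (Pi.single j (1:ℝ) : Fin n → ℝ) = w := by
      intro w
      funext k
      simp [Finset.sum_apply, Pi.single_apply]
    ext k
    · simp [Prod.fst_sum, h1]
    · simp [Prod.snd_sum, Prod.fst_sum, h1]
    · simp [Prod.snd_sum, h1]
  conv_lhs => rw [hv]
  simp only [map_add, map_sum, map_smul, smul_eq_mul]

lemma contDiff_p2 {n : ℕ} {L : E n → ℝ} (hL : ContDiff ℝ (⊤ : ℕ∞) L) (i : Fin n) :
    ContDiff ℝ (⊤ : ℕ∞) (p2 L i) := by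
  have h := hL.fderiv_right (m := (⊤ : ℕ∞)) (by simp)
  exact (ContinuousLinearMap.apply ℝ ℝ ((0,0,Pi.single i 1) : E n)).contDiff.comp h

lemma spray_fderiv {n : ℕ} (G : E n → Fin n → ℝ) (hG : ContDiff ℝ (⊤ : ℕ∞) G) (u X : E n) :
    (fderiv ℝ (spray G) u X).1 = X.2.1 := by
  set l1 : E n →L[ℝ] (Fin n → ℝ) :=
    (ContinuousLinearMap.fst ℝ (Fin n → ℝ) (Fin n → ℝ)).comp
      (ContinuousLinearMap.snd ℝ (Fin n → ℝ) ((Fin n → ℝ) × (Fin n → ℝ))) with hl1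
  set c2 : E n →L[ℝ] (Fin n → ℝ) :=
    (ContinuousLinearMap.snd ℝ (Fin n → ℝ) (Fin n → ℝ)).comp
      (ContinuousLinearMap.snd ℝ (Fin n → ℝ) ((Fin n → ℝ) × (Fin n → ℝ))) with hc2
  set l2 : E n →L[ℝ] (Fin n → ℝ) := (2:ℝ) • c2 with hl2
  set l3 : E n →L[ℝ] (Fin n → ℝ) := (-3:ℝ) • fderiv ℝ G u with hl3
  have hs : spray G = fun v : E n => (v.2.1, ((2:ℝ) • v.2.2, (-3:ℝ) • G v)) := by
    funext v
    refine Prod.ext rfl (Prod.ext ?_ ?_) <;> funext i <;>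
      simp [spray, Pi.smul_apply, smul_eq_mul] <;> ring
  have h1 : HasFDerivAt (fun v : E n => v.2.1) l1 u := l1.hasFDerivAt
  have h2 : HasFDerivAt (fun v : E n => (2:ℝ) • v.2.2) l2 u := by
    have hsnd : HasFDerivAt (fun v : E n => v.2.2) c2 u := c2.hasFDerivAt
    exact hsnd.const_smul (2:ℝ)
  have h3 : HasFDerivAt (fun v : E n => (-3:ℝ) • G v) l3 u :=
    ((hG.differentiable (by simp)) u).hasFDerivAt.const_smul (-3:ℝ)
  have h : HasFDerivAt (spray G) (l1.prod (l2.prod l3)) u := by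
    rw [hs]; exact h1.prodMk (h2.prodMk h3)
  rw [h.fderiv]
  rfl

/-- local expression of the Lie derivative of `θ²_L` along a semispray:
`(𝓛_S θ²_L)(u)(X) = Σᵢ [d_T(∂L/∂y²ⁱ)(u) − 6 Σⱼ g_{ji}(u) Gʲ(u)] X₀ⁱ + Σᵢ ∂L/∂y²ⁱ(u) X₁ⁱ`. -/
theorem statement7 {n : ℕ} (hn : 1 ≤ n) (L : E n → ℝ) (hL : ContDiff ℝ (⊤ : ℕ∞) L)
    (G : E n → Fin n → ℝ) (hG : ContDiff ℝ (⊤ : ℕ∞) G) :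
    ∀ (u X : E n),
      lieForm (spray G) (theta2 L) u X
        = ∑ i, (dT (p2 L i) u - 6 * ∑ j, gmet L j i u * G u j) * X.1 i
          + ∑ i, p2 L i u * X.2.1 i := by
  intro u X
  have hp2 : ∀ i, ContDiff ℝ (⊤ : ℕ∞) (p2 L i) := contDiff_p2 hL
  have hdiff : ∀ i ∈ Finset.univ, DifferentiableAt ℝ (fun v => p2 L i v * X.1 i) u :=
    fun i _ => (((hp2 i).differentiable (by simp)) u).mul_const _
  unfold lieForm theta2
  -- first term
  have e1 : fderiv ℝ (fun v => ∑ i, p2 L i v * X.1 i) u (spray G u)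
      = ∑ i, fderiv ℝ (p2 L i) u (spray G u) * X.1 i := by
    rw [fderiv_fun_sum hdiff]
    rw [ContinuousLinearMap.sum_apply]
    refine Finset.sum_congr rfl fun i _ => ?_
    rw [fderiv_mul_const (((hp2 i).differentiable (by simp)) u)]
    simp [smul_eq_mul, mul_comm]
  have e2 : ∀ i, fderiv ℝ (p2 L i) u (spray G u)
      = dT (p2 L i) u - 6 * ∑ j, gmet L j i u * G u j := by
    intro i
    rw [clm_expand (fderiv ℝ (p2 L i) u) (spray G u)]
    show (∑ j, u.2.1 j * px (p2 L i) j u)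
        + (∑ j, (2 * u.2.2 j) * p1 (p2 L i) j u)
        + (∑ j, (-3 * G u j) * p2 (p2 L i) j u) = _
    rw [dT, Finset.mul_sum, ← Finset.sum_sub_distrib, ← Finset.sum_add_distrib,
      ← Finset.sum_add_distrib]
    refine Finset.sum_congr rfl fun j _ => ?_
    rw [gmet]
    ring
  rw [e1, spray_fderiv G hG u X]
  exact congrArg₂ (· + ·) (Finset.sum_congr rfl fun i _ => by rw [e2 i]) rfl
end
end

section
/- Uniqueness of the canonical semispray (Theorem): let L be a regular smooth second-order Lagrangian on E. There exists exactly one family of smooth coefficients G = (Gⁱ) such that the semispray S with coefficients G satisfies 𝓛_S(θ²_L) = θ¹_L (i.e., (𝓛_S θ²_L)(u)(X) = θ¹_L(u)(X) for all u, X ∈ E); its coefficients are Gʲ = (1/6) Σᵢ gʲⁱ [d_T(∂L/∂y²ⁱ) − ∂L/∂y¹ⁱ]. -/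
noncomputable section

namespace S8

variable {n : ℕ} {L : E n → ℝ}

lemma cd_pdir {f : E n → ℝ} (hf : ContDiff ℝ (⊤ : ℕ∞) f) (c : E n) :
    ContDiff ℝ (⊤ : ℕ∞) fun u => fderiv ℝ f u c :=
  (hf.fderiv_right (by simp)).clm_apply contDiff_const

lemma cd_px {f : E n → ℝ} (hf : ContDiff ℝ (⊤ : ℕ∞) f) (i : Fin n) : ContDiff ℝ (⊤ : ℕ∞) (px f i) :=
  cd_pdir hf _

lemma cd_p1 {f : E n → ℝ} (hf : ContDiff ℝ (⊤ : ℕ∞) f) (i : Fin n) : ContDiff ℝ (⊤ : ℕ∞) (p1 f i) :=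
  cd_pdir hf _

lemma cd_p2 {f : E n → ℝ} (hf : ContDiff ℝ (⊤ : ℕ∞) f) (i : Fin n) : ContDiff ℝ (⊤ : ℕ∞) (p2 f i) :=
  cd_pdir hf _

lemma c21 (j : Fin n) : ContDiff ℝ (⊤ : ℕ∞) (fun u : E n => u.2.1 j) :=
  (contDiff_apply ℝ ℝ j).comp (contDiff_fst.comp contDiff_snd)

lemma c22 (j : Fin n) : ContDiff ℝ (⊤ : ℕ∞) (fun u : E n => u.2.2 j) :=
  (contDiff_apply ℝ ℝ j).comp (contDiff_snd.comp contDiff_snd)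

lemma cd_dT {f : E n → ℝ} (hf : ContDiff ℝ (⊤ : ℕ∞) f) : ContDiff ℝ (⊤ : ℕ∞) (dT f) := by
  show ContDiff ℝ (⊤ : ℕ∞) fun u : E n => ∑ i, (u.2.1 i * px f i u + 2 * u.2.2 i * p1 f i u)
  exact ContDiff.sum fun i _ =>
    ((c21 i).mul (cd_px hf i)).add ((contDiff_const.mul (c22 i)).mul (cd_p1 hf i))

lemma clm_decomp (φ : E n →L[ℝ] ℝ) (X : E n) :
    φ X = (∑ i, X.1 i * φ (Pi.single i 1, 0, 0)) + (∑ i, X.2.1 i * φ (0, Pi.single i 1, 0))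
      + (∑ i, X.2.2 i * φ (0, 0, Pi.single i 1)) := by
  have hX : X = (∑ i, X.1 i • ((Pi.single i 1, 0, 0) : E n))
      + (∑ i, X.2.1 i • ((0, Pi.single i 1, 0) : E n))
      + (∑ i, X.2.2 i • ((0, 0, Pi.single i 1) : E n)) := by
    refine Prod.ext ?_ (Prod.ext ?_ ?_) <;>
      · funext j
        simp [Prod.fst_sum, Prod.snd_sum, Finset.sum_apply, Pi.single_apply, mul_ite,
          Finset.sum_ite_eq, Finset.sum_ite_eq']
  conv_lhs => rw [hX]
  simp only [map_add, map_sum, map_smul, smul_eq_mul]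

lemma fderiv_eval (f : E n → ℝ) (u w : E n) :
    fderiv ℝ f u w = (∑ i, w.1 i * px f i u) + (∑ i, w.2.1 i * p1 f i u)
      + (∑ i, w.2.2 i * p2 f i u) :=
  clm_decomp (fderiv ℝ f u) w

lemma fderiv_pdir {f : E n → ℝ} (hf : ContDiff ℝ (⊤ : ℕ∞) f) (c u w : E n) :
    fderiv ℝ (fun v => fderiv ℝ f v c) u w = fderiv ℝ (fderiv ℝ f) u w c := by
  rw [fderiv_clm_apply (((hf.fderiv_right (m := (⊤ : ℕ∞)) (by simp)).differentiable (by simp)) u)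
    (differentiableAt_const c)]
  simp

lemma p2p2_symm (hL : ContDiff ℝ (⊤ : ℕ∞) L) (i j : Fin n) (u : E n) :
    p2 (p2 L i) j u = p2 (p2 L j) i u := by
  have hsym := (hL.contDiffAt (x := u)).isSymmSndFDerivAt (by rw [minSmoothness_of_isRCLikeNormedField]; exact WithTop.coe_le_coe.mpr (le_top : (2 : ℕ∞) ≤ ⊤))
  show fderiv ℝ (fun v => fderiv ℝ L v (0, 0, Pi.single i 1)) u (0, 0, Pi.single j 1)
    = fderiv ℝ (fun v => fderiv ℝ L v (0, 0, Pi.single j 1)) u (0, 0, Pi.single i 1)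
  rw [fderiv_pdir hL, fderiv_pdir hL]
  exact hsym _ _

lemma p2p2_eq (hL : ContDiff ℝ (⊤ : ℕ∞) L) (i j : Fin n) (u : E n) :
    p2 (p2 L i) j u = 2 * gmet L i j u := by
  rw [p2p2_symm hL, gmet]; ring

lemma fderiv_sum_mul {f : Fin n → E n → ℝ} (hf : ∀ i, ContDiff ℝ (⊤ : ℕ∞) (f i)) (c : Fin n → ℝ)
    (u w : E n) :
    fderiv ℝ (fun v => ∑ i, f i v * c i) u w = ∑ i, fderiv ℝ (f i) u w * c i := by
  rw [fderiv_fun_sum (fun i _ => (((hf i).differentiable (by simp)) u).mul_const _)]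
  simp only [fderiv_mul_const (((hf _).differentiable (by simp)) _)]
  simp [mul_comm]

lemma spray_fderiv_fst {G : E n → Fin n → ℝ} (hG : Differentiable ℝ G) (u X : E n) :
    (fderiv ℝ (spray G) u X).1 = X.2.1 := by
  have h1 : HasFDerivAt (fun v : E n => v.2.1)
      ((ContinuousLinearMap.fst ℝ (Fin n → ℝ) (Fin n → ℝ)).comp
        (ContinuousLinearMap.snd ℝ (Fin n → ℝ) ((Fin n → ℝ) × (Fin n → ℝ)))) u :=
    ((ContinuousLinearMap.fst ℝ (Fin n → ℝ) (Fin n → ℝ)).comp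
        (ContinuousLinearMap.snd ℝ (Fin n → ℝ) ((Fin n → ℝ) × (Fin n → ℝ)))).hasFDerivAt
  have h2 : DifferentiableAt ℝ
      (fun v : E n => ((fun i => 2 * v.2.2 i, fun i => -3 * G v i) :
        (Fin n → ℝ) × (Fin n → ℝ))) u := by
    refine DifferentiableAt.prodMk ?_ ?_ <;> refine differentiableAt_pi.mpr fun i => ?_
    · exact (differentiableAt_const _).mul ((differentiable_pi.mp
        (differentiable_snd.comp differentiable_snd) i) u)
    · exact (differentiableAt_const _).mul ((differentiable_pi.mp hG i) u)
  have hS : HasFDerivAt (spray G) (ContinuousLinearMap.prod _ (fderiv ℝ _ u)) u :=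
    h1.prodMk h2.hasFDerivAt
  rw [hS.fderiv]
  rfl

lemma lie_eval (hL : ContDiff ℝ (⊤ : ℕ∞) L) {G : E n → Fin n → ℝ} (hG : Differentiable ℝ G)
    (u X : E n) :
    lieForm (spray G) (theta2 L) u X =
      (∑ i, (dT (p2 L i) u - 3 * ∑ j, G u j * p2 (p2 L i) j u) * X.1 i)
        + ∑ i, p2 L i u * X.2.1 i := by
  have hp2 : ∀ i : Fin n, ContDiff ℝ (⊤ : ℕ∞) (p2 L i) := fun i => cd_p2 hL i
  have e1 : fderiv ℝ (fun v => theta2 L v X) u (spray G u)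
      = ∑ i, fderiv ℝ (p2 L i) u (spray G u) * X.1 i := by
    simp only [theta2]
    exact fderiv_sum_mul hp2 _ u _
  have e2 : ∀ i, fderiv ℝ (p2 L i) u (spray G u)
      = dT (p2 L i) u - 3 * ∑ j, G u j * p2 (p2 L i) j u := by
    intro i
    rw [fderiv_eval (p2 L i) u (spray G u)]
    simp only [spray]
    rw [dT, ← Finset.sum_add_distrib, Finset.mul_sum, ← Finset.sum_sub_distrib,
      ← Finset.sum_add_distrib]
    exact Finset.sum_congr rfl fun j _ => by ring
  have e3 : theta2 L u (fderiv ℝ (spray G) u X) = ∑ i, p2 L i u * X.2.1 i := by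
    have hfst := spray_fderiv_fst hG u X
    simp only [theta2, hfst]
  rw [lieForm, e1, e3]
  congr 1
  exact Finset.sum_congr rfl fun i _ => by rw [e2]

lemma mulVec_apply' (u : E n) (v : Fin n → ℝ) (i : Fin n) :
    (gmat L u).mulVec v i = ∑ j, gmet L i j u * v j := by
  simp [Matrix.mulVec, dotProduct, gmat]

lemma cond_iff (hL : ContDiff ℝ (⊤ : ℕ∞) L) (u : E n) (v : Fin n → ℝ) :
    (∀ i, dT (p2 L i) u - 3 * ∑ j, v j * p2 (p2 L i) j u = p1 L i u)
      ↔ ∀ i, (gmat L u).mulVec v i = 1/6 * (dT (p2 L i) u - p1 L i u) := by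
  have key : ∀ i, 3 * ∑ j, v j * p2 (p2 L i) j u = 6 * (gmat L u).mulVec v i := by
    intro i
    rw [mulVec_apply', Finset.mul_sum, Finset.mul_sum]
    exact Finset.sum_congr rfl fun j _ => by rw [p2p2_eq hL]; ring
  constructor
  · intro h i
    have h1 := h i
    have h2 := key i
    linarith
  · intro h i
    have h1 := h i
    have h2 := key i
    linarith

lemma mulVec_Gcan (hL : ContDiff ℝ (⊤ : ℕ∞) L) (hreg : ∀ u : E n, IsUnit (gmat L u)) (u : E n) :
    ∀ i, (gmat L u).mulVec (Gcan L u) i = 1/6 * (dT (p2 L i) u - p1 L i u) := by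
  intro i
  have hdet : IsUnit (gmat L u).det := (Matrix.isUnit_iff_isUnit_det _).mp (hreg u)
  have hmul : gmat L u * (gmat L u)⁻¹ = 1 := Matrix.mul_nonsing_inv _ hdet
  rw [mulVec_apply']
  calc ∑ j, gmet L i j u * Gcan L u j
      = ∑ k, 1/6 * ((dT (p2 L k) u - p1 L k u) * ∑ j, gmat L u i j * (gmat L u)⁻¹ j k) := by
        simp only [Gcan, gmat, Matrix.of_apply, Finset.mul_sum]
        rw [Finset.sum_comm]
        exact Finset.sum_congr rfl fun k _ => Finset.sum_congr rfl fun j _ => by ring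
    _ = 1/6 * (dT (p2 L i) u - p1 L i u) := by
        simp only [← Matrix.mul_apply, hmul, Matrix.one_apply]
        simp [mul_ite, Finset.sum_ite_eq]

lemma cd_inv_entry (hL : ContDiff ℝ (⊤ : ℕ∞) L) (hreg : ∀ u : E n, IsUnit (gmat L u)) (j i : Fin n) :
    ContDiff ℝ (⊤ : ℕ∞) fun u => (gmat L u)⁻¹ j i := by
  have hent : ∀ k l : Fin n, ContDiff ℝ (⊤ : ℕ∞) fun u => gmat L u k l := by
    intro k l
    have : ContDiff ℝ (⊤ : ℕ∞) fun u => (1/2 : ℝ) * p2 (p2 L l) k u :=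
      contDiff_const.mul (cd_p2 (cd_p2 hL l) k)
    exact this
  have cd_det : ∀ M : E n → Matrix (Fin n) (Fin n) ℝ,
      (∀ k l, ContDiff ℝ (⊤ : ℕ∞) fun u => M u k l) → ContDiff ℝ (⊤ : ℕ∞) fun u => (M u).det := by
    intro M h
    simp only [Matrix.det_apply']
    exact ContDiff.sum fun σ _ => contDiff_const.mul (contDiff_prod fun k _ => h (σ k) k)
  have hdet : ContDiff ℝ (⊤ : ℕ∞) fun u => (gmat L u).det := cd_det _ hent
  have hne : ∀ u, (gmat L u).det ≠ 0 := fun u =>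
    ((Matrix.isUnit_iff_isUnit_det _).mp (hreg u)).ne_zero
  have hadj : ContDiff ℝ (⊤ : ℕ∞) fun u => (gmat L u).adjugate j i := by
    simp only [Matrix.adjugate_apply]
    refine cd_det _ fun k l => ?_
    simp only [Matrix.updateRow_apply]
    split_ifs
    · exact contDiff_const
    · exact hent k l
  simp only [Matrix.inv_def, Matrix.smul_apply, smul_eq_mul, Ring.inverse_eq_inv']
  exact (hdet.inv hne).mul hadj

lemma cd_Gcan (hL : ContDiff ℝ (⊤ : ℕ∞) L) (hreg : ∀ u : E n, IsUnit (gmat L u)) :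
    ContDiff ℝ (⊤ : ℕ∞) fun u => Gcan L u := by
  refine contDiff_pi.mpr fun j => ?_
  simp only [Gcan]
  exact contDiff_const.mul (ContDiff.sum fun i _ =>
    (cd_inv_entry hL hreg j i).mul ((cd_dT (cd_p2 hL i)).sub (cd_p1 hL i)))

lemma cond_of (hL : ContDiff ℝ (⊤ : ℕ∞) L) {G : E n → Fin n → ℝ} (hG : Differentiable ℝ G)
    (h : ∀ u X : E n, lieForm (spray G) (theta2 L) u X = theta1 L u X) (u : E n) (i : Fin n) :
    dT (p2 L i) u - 3 * ∑ j, G u j * p2 (p2 L i) j u = p1 L i u := by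
  have h1 := h u (Pi.single i 1, 0, 0)
  rw [lie_eval hL hG] at h1
  simp only [theta1] at h1
  simpa [Pi.single_apply, mul_ite, Finset.sum_ite_eq, Finset.sum_ite_eq'] using h1

lemma lie_of_cond (hL : ContDiff ℝ (⊤ : ℕ∞) L) {G : E n → Fin n → ℝ} (hG : Differentiable ℝ G)
    (h : ∀ (u : E n) (i : Fin n),
      dT (p2 L i) u - 3 * ∑ j, G u j * p2 (p2 L i) j u = p1 L i u) :
    ∀ u X : E n, lieForm (spray G) (theta2 L) u X = theta1 L u X := by
  intro u X
  rw [lie_eval hL hG, theta1, Finset.sum_add_distrib]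
  congr 1
  exact Finset.sum_congr rfl fun i _ => by rw [h u i]

end S8

/-- for a regular second-order Lagrangian there is exactly one family of smooth
semispray coefficients `G` with `𝓛_S(θ²_L) = θ¹_L`, namely the canonical coefficients
`Gʲ = (1/6) Σᵢ gʲⁱ [d_T(∂L/∂y²ⁱ) − ∂L/∂y¹ⁱ]`. -/
theorem statement8 {n : ℕ} (hn : 1 ≤ n) (L : E n → ℝ) (hL : ContDiff ℝ (⊤ : ℕ∞) L)
    (hreg : ∀ u : E n, IsUnit (gmat L u)) :
    (ContDiff ℝ (⊤ : ℕ∞) (fun u => Gcan L u) ∧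
      ∀ u X : E n, lieForm (spray (Gcan L)) (theta2 L) u X = theta1 L u X) ∧
    ∀ G : E n → Fin n → ℝ, ContDiff ℝ (⊤ : ℕ∞) G →
      (∀ u X : E n, lieForm (spray G) (theta2 L) u X = theta1 L u X) →
      G = Gcan L :=  by
  have hGs : ContDiff ℝ (⊤ : ℕ∞) fun u => Gcan L u := S8.cd_Gcan hL hreg
  have hGd : Differentiable ℝ (Gcan L) := hGs.differentiable (by simp)
  refine ⟨⟨hGs, ?_⟩, ?_⟩
  · exact S8.lie_of_cond hL hGd fun u i =>
      ((S8.cond_iff hL u (Gcan L u)).mpr fun k => S8.mulVec_Gcan hL hreg u k) i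
  · intro G hG hcond
    funext u
    have hGd' : Differentiable ℝ G := hG.differentiable (by simp)
    have h1 : ∀ i, (gmat L u).mulVec (G u) i = 1/6 * (dT (p2 L i) u - p1 L i u) :=
      (S8.cond_iff hL u (G u)).mp fun i => S8.cond_of hL hGd' hcond u i
    have h2 := S8.mulVec_Gcan hL hreg u
    have hdet : IsUnit (gmat L u).det := (Matrix.isUnit_iff_isUnit_det _).mp (hreg u)
    have heq : (gmat L u).mulVec (G u) = (gmat L u).mulVec (Gcan L u) :=
      funext fun i => by rw [h1 i, h2 i]
    have := congrArg (fun v => ((gmat L u)⁻¹).mulVec v) heq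
    simpa [Matrix.mulVec_mulVec, Matrix.nonsing_inv_mul _ hdet, Matrix.one_mulVec] using this
end
end
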